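/- Let q be a prime power and n ≥ 1. If G ≅ PG(n−1,q) and 𝓕 is a partition of E(G) into flats of G with |𝓕| > 1, then |𝓕| > q^{n/2−1}. -/

import Mathlib

open Set Matroid

namespace GrowthRate

variable {α : Type*} {β : Type*}

/-- The deletion `M ＼ D` of a set from a matroid. -/
def del (M : Matroid α) (D : Set α) : Matroid α := M ↾ (M.E \ D)

/-- The contraction `M ／ C`, defined via duality. -/
def con (M : Matroid α) (C : Set α) : Matroid α := (del M✶ C)✶

/-- `N` is a minor of `M`. -/
def IsMinorOf (N M : Matroid α) : Prop := ∃ C D : Set α, N = del (con M C) D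

/-- The (extended) rank of a matroid: the supremum of the cardinalities of independent sets. -/
noncomputable def erk (M : Matroid α) : ℕ∞ :=
  ⨆ I : {I : Set α // M.Indep I}, (I : Set α).encard

/-- The rank `r(M)` of a matroid, as a natural number. -/
noncomputable def rk (M : Matroid α) : ℕ := (erk M).toNat

/-- The extended rank `r_M(X)` of a set in a matroid. -/
noncomputable def erS (M : Matroid α) (X : Set α) : ℕ∞ := erk (M ↾ X)

/-- The rank `r_M(X)` of a set in a matroid, as a natural number. -/
noncomputable def rS (M : Matroid α) (X : Set α) : ℕ := (erS M X).toNat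

/-- `e` is a nonloop of `M`. -/
def Nonloop (M : Matroid α) (e : α) : Prop := M.Indep {e}

/-- `M` is loopless. -/
def Loopless (M : Matroid α) : Prop := ∀ e ∈ M.E, M.Indep {e}

/-- `M` is simple: it has no loops and no pair of distinct parallel elements. -/
def Simple (M : Matroid α) : Prop := ∀ e ∈ M.E, ∀ f ∈ M.E, M.Indep {e, f}

/-- A point of a matroid is a rank-one flat. -/
def IsPoint (M : Matroid α) (P : Set α) : Prop := M.IsFlat P ∧ erS M P = 1

/-- `ε(M)`: the number of points (rank-one flats) of `M`. -/
noncomputable def eps (M : Matroid α) : ℕ := {P : Set α | IsPoint M P}.ncard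

/-- A circuit: a minimal dependent set. -/
def Circuit (M : Matroid α) (C : Set α) : Prop := M.Dep C ∧ ∀ e ∈ C, M.Indep (C \ {e})

/-- A cocircuit: a circuit of the dual. -/
def Cocircuit (M : Matroid α) (C : Set α) : Prop := Circuit M✶ C

/-- A matroid is weakly round if every cocircuit has rank at least `r(M) - 1`. -/
def WeaklyRound (M : Matroid α) : Prop := ∀ C, Cocircuit M C → rk M ≤ rS M C + 1

/-- An isomorphism between matroids, as a ground-set bijection preserving independence. -/
def IsoTo (M : Matroid α) (N : Matroid β) : Prop :=
  ∃ φ : α → β, Set.BijOn φ M.E N.E ∧ ∀ I ⊆ M.E, (M.Indep I ↔ N.Indep (φ '' I))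

/-- `M` is representable over the field `𝔽`. -/
def RepOver (𝔽 : Type) [Field 𝔽] (M : Matroid α) : Prop :=
  ∃ (n : ℕ) (φ : α → (Fin n → 𝔽)), ∀ I : Set α, I ⊆ M.E →
    (M.Indep I ↔ LinearIndependent 𝔽 (fun x : I => φ (x : α)))

/-- `M` is representable over the finite field `GF(q)` with `q` elements. -/
def RepGF (q : ℕ) (M : Matroid α) : Prop :=
  ∃ (𝔽 : Type) (fld : Field 𝔽) (_ : Fintype 𝔽),
    Fintype.card 𝔽 = q ∧ @RepOver α 𝔽 fld M

/-- `G` is (isomorphic to) the projective geometry `PG(n-1, q)`: a simple rank-`n`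
`GF(q)`-representable matroid with `(q^n - 1)/(q - 1)` elements. -/
def IsPG (q n : ℕ) (G : Matroid β) : Prop :=
  G.E.Finite ∧ Simple G ∧ rk G = n ∧ RepGF q G ∧
    G.E.ncard = ∑ i ∈ Finset.range n, q ^ i

/-- `A` is (isomorphic to) the affine geometry `AG(n-1, q)`: a projective geometry
`PG(n-1,q)` with a hyperplane deleted. -/
def IsAG (q n : ℕ) (A : Matroid β) : Prop :=
  ∃ (G : Matroid ℕ) (H : Set ℕ), IsPG q n G ∧ G.IsFlat H ∧ rS G H = n - 1 ∧
    IsoTo A (del G H)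

/-- `N` is a simplification of `M`. -/
def IsSimplificationOf (N M : Matroid α) : Prop :=
  ∃ X : Set α, X ⊆ M.E ∧ N = M ↾ X ∧ Simple N ∧
    ∀ e, Nonloop M e → ∃ x ∈ X, M.closure {x} = M.closure {e}

/-- `M` and `N` are equal up to simplification: they have isomorphic simplifications. -/
def SiIso (M : Matroid α) (N : Matroid β) : Prop :=
  ∃ (M' : Matroid α) (N' : Matroid β),
    IsSimplificationOf M' M ∧ IsSimplificationOf N' N ∧ IsoTo M' N'

/-- `N` is a `k`-element projection of `M`. -/
def ProjectionBy (k : ℕ) (N M : Matroid α) : Prop :=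
  ∃ (P : Matroid α) (K : Set α), P.Indep K ∧ K.Finite ∧ K.ncard = k ∧
    del P K = M ∧ con P K = N

/-- The class `𝒫_q(k)`: matroids of rank at least two that are, up to simplification,
a loopless `k`-element projection of a projective geometry over `GF(q)`. -/
def PClass (q k : ℕ) (M : Matroid α) : Prop :=
  2 ≤ rk M ∧ ∃ (G N : Matroid ℕ) (n : ℕ), IsPG q n G ∧ ProjectionBy k N G ∧
    Loopless N ∧ SiIso M N

/-- The class `𝒫_q(k, h)`: matroids in `𝒫_q(k)` all of whose restrictions of rank
at most `h` are `GF(q)`-representable. -/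
def PClassH (q k h : ℕ) (M : Matroid α) : Prop :=
  PClass q k M ∧ ∀ X ⊆ M.E, rS M X ≤ h → RepGF q (M ↾ X)

/-- The class `𝒫_q^d(k)`: matroids in `𝒫_q(k)` with `ε(M) = (q^(r+k)-1)/(q-1) - d`. -/
def PdClass (q k d : ℕ) (M : Matroid α) : Prop :=
  PClass q k M ∧ eps M + d = ∑ i ∈ Finset.range (rk M + k), q ^ i

/-- Membership `(k, d) ∈ D_q`, i.e. `0 ≤ d ≤ q (q^(2k) - 1)/(q^2 - 1)`. -/
def memD (q k d : ℕ) : Prop := d ≤ q * ∑ i ∈ Finset.range k, q ^ (2 * i)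

/-- The order `(k, d) ≺ (k', d')` on `D_q`: lexicographic on `(k, -d)`. -/
def Dlt (k d k' d' : ℕ) : Prop := k < k' ∨ (k = k' ∧ d' < d)

/-- `𝓜` is a (nonempty) minor-closed class of (finite) matroids, closed under isomorphism. -/
def IsMClass (𝓜 : Set (Matroid α)) : Prop :=
  𝓜.Nonempty ∧ (∀ M ∈ 𝓜, M.Finite) ∧
    (∀ ⦃M N : Matroid α⦄, M ∈ 𝓜 → IsMinorOf N M → N ∈ 𝓜) ∧
    (∀ ⦃M N : Matroid α⦄, M ∈ 𝓜 → IsoTo M N → N ∈ 𝓜)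

/-- The growth rate function `h_𝓜(n)` of a class of matroids. -/
noncomputable def hFn (𝓜 : Set (Matroid α)) (n : ℕ) : ℕ∞ :=
  ⨆ M ∈ {M ∈ 𝓜 | rk M ≤ n}, (eps M : ℕ∞)

/-- `𝓜` is a base-`q` exponentially dense minor-closed class, i.e. `𝓜 ∈ E_q`. -/
def ExpDense (q : ℕ) (𝓜 : Set (Matroid α)) : Prop :=
  IsMClass 𝓜 ∧ ∃ a : ℕ, ∀ n : ℕ,
    ((∑ i ∈ Finset.range n, q ^ i : ℕ) : ℕ∞) ≤ hFn 𝓜 n ∧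
      hFn 𝓜 n ≤ ((a * q ^ n : ℕ) : ℕ∞)

/-- `M` is (isomorphic to) the uniform matroid `U_{a,b}`. -/
def IsUnif (a b : ℕ) (M : Matroid β) : Prop :=
  M.E.Finite ∧ M.E.ncard = b ∧
    ∀ I : Set β, M.Indep I ↔ I ⊆ M.E ∧ I.Finite ∧ I.ncard ≤ a

/-- `c` satisfies the five properties of the parameter `c_𝓜` for the class `𝓜`
(equivalently, `c_𝓜 ≤ c`). -/
def IsCtrl (q c : ℕ) (𝓜 : Set (Matroid α)) : Prop :=
  (∀ M ∈ 𝓜, ¬ IsUnif 2 (c + 2) M) ∧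
  (∀ q' : ℕ, IsPrimePow q' → q < q' → ∀ M ∈ 𝓜, ¬ IsPG q' c M) ∧
  (∀ M ∈ 𝓜, eps M < q ^ (rk M + c)) ∧
  (∀ M ∈ 𝓜, ∀ C ⊆ M.E, eps M < q ^ (c + rS M C) * eps (con M C)) ∧
  (∀ k : ℕ, c ≤ k → ∀ M ∈ 𝓜, ¬ PClass q k M)

/-- Two sets are skew in `M`, i.e. their local connectivity `⊓_M(X,Y)` is zero. -/
def SkewPair (M : Matroid α) (X Y : Set α) : Prop :=
  erS M (X ∪ Y) = erS M X + erS M Y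

/-- `(X, Y)` is a modular pair in `M`. -/
def ModPair (M : Matroid α) (X Y : Set α) : Prop :=
  erS M (X ∩ Y) + erS M (X ∪ Y) = erS M X + erS M Y

/-- `S` is a `(q, k, t)`-stack. -/
def IsStack (q k t : ℕ) (S : Matroid α) : Prop :=
  ∃ F : Fin k → Set α, (∀ i, F i ⊆ S.E) ∧ Pairwise (Function.onFun Disjoint F) ∧
    S.Spanning (⋃ i, F i) ∧
    ∀ i : Fin k,
      rk ((con S (⋃ j : Fin k, ⋃ (_ : j < i), F j)) ↾ F i) ≤ t ∧
      ¬ RepGF q ((con S (⋃ j : Fin k, ⋃ (_ : j < i), F j)) ↾ F i)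

/-- `T` is the truncation of `M`. -/
def IsTruncationOf (T M : Matroid α) : Prop :=
  1 ≤ rk M ∧ T.E = M.E ∧
    ∀ I : Set α, T.Indep I ↔ (M.Indep I ∧ I.ncard ≤ rk M - 1)

/-- `P` is the modular sum (generalised parallel connection) of `M` and `N`:
it has ground set `E(M) ∪ E(N)`, has both `M` and `N` as restrictions, and its flats
are precisely the sets whose traces on `E(M)` and `E(N)` are flats. -/
def IsModularSum (P M N : Matroid α) : Prop :=
  P.E = M.E ∪ N.E ∧ (P ↾ M.E) = M ∧ (P ↾ N.E) = N ∧
    ∀ F : Set α, P.IsFlat F ↔ (F ⊆ P.E ∧ M.IsFlat (F ∩ M.E) ∧ N.IsFlat (F ∩ N.E))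

end GrowthRate

open GrowthRate

universe u

/-! A representation `φ` of `PG(n-1, q)` over `GF(q)` meets every line of `T = span φ(E)`:
it injects `E` into the projective space `ℙ(T)`, and both have `(q^n - 1)/(q - 1)` points.
Hence the spans of the flats of `𝓕` cover `T` and pairwise meet only in `0`. Any two of them
have dimensions summing to at most `n`, so all but the largest have dimension at most `n/2`,
and the largest is proper. Counting vectors, `q^n ≤ q^(n-1) + (|𝓕| - 1) q^(n/2)`, that is,
`q^(n-1-⌊n/2⌋) < |𝓕|`. -/

open Module Submodule Finset

lemma pow_sub_one_sub_half_le {q n a k : ℕ} (hq : 2 ≤ q) (ha : a < n)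
    (h : q ^ n ≤ q ^ a + k * q ^ (n / 2)) : q ^ (n - 1 - n / 2) ≤ k := by
  have hpow_a : q ^ a ≤ q ^ (n - 1) := Nat.pow_le_pow_right (by omega) (by omega)
  have hpow_n : 2 * q ^ (n - 1) ≤ q ^ n := by
    calc 2 * q ^ (n - 1) ≤ q * q ^ (n - 1) := Nat.mul_le_mul_right _ hq
      _ = q ^ n := by rw [← pow_succ']; congr 1; omega
  have hsplit : q ^ (n - 1 - n / 2) * q ^ (n / 2) = q ^ (n - 1) := by
    rw [← pow_add]; congr 1; omega
  refine Nat.le_of_mul_le_mul_right ?_ (pow_pos (by omega : 0 < q) (n / 2))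
  linarith

lemma rpow_div_two_sub_one_le_pow {q : ℝ} (hq : 1 ≤ q) (n : ℕ) :
    q ^ ((n : ℝ) / 2 - 1) ≤ q ^ (n - 1 - n / 2) := by
  rw [← Real.rpow_natCast]
  refine Real.rpow_le_rpow_of_exponent_le hq ?_
  have h : n ≤ 2 * (n - 1 - n / 2) + 2 := by omega
  have h' : (n : ℝ) ≤ 2 * ((n - 1 - n / 2 : ℕ) : ℝ) + 2 := by exact_mod_cast h
  linarith

namespace GrowthRate

lemma erk_eq_eRank {α : Type*} (M : Matroid α) : erk M = M.eRank := by
  refine le_antisymm (iSup_le fun I ↦ I.2.encard_le_eRank) ?_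
  obtain ⟨B, hB⟩ := M.exists_isBase
  rw [← hB.encard_eq_eRank]
  exact le_iSup (fun I : {I : Set α // M.Indep I} ↦ I.1.encard) ⟨B, hB.indep⟩

lemma Simple.indep_singleton {α : Type*} {M : Matroid α} (hM : Simple M) {e : α} (he : e ∈ M.E) :
    M.Indep {e} := by
  simpa using hM e he e he

def IsRepresentation {α V : Type*} (𝔽 : Type*) [Field 𝔽] [AddCommGroup V] [Module 𝔽 V]
    (M : Matroid α) (φ : α → V) : Prop :=
  ∀ I ⊆ M.E, M.Indep I ↔ LinearIndepOn 𝔽 φ I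

def CoversEveryLine {α V : Type*} (𝔽 : Type*) [Field 𝔽] [AddCommGroup V] [Module 𝔽 V]
    (M : Matroid α) (φ : α → V) : Prop :=
  ∀ v ∈ span 𝔽 (φ '' M.E), v ≠ 0 → ∃ e ∈ M.E, ∃ c : 𝔽ˣ, c • φ e = v

namespace IsRepresentation

variable {α V 𝔽 : Type*} [Field 𝔽] [AddCommGroup V] [Module 𝔽 V] {M : Matroid α} {φ : α → V}
  {I X F F' : Set α} {e f : α}

lemma linearIndepOn (h : IsRepresentation 𝔽 M φ) (hI : M.Indep I) : LinearIndepOn 𝔽 φ I :=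
  (h I hI.subset_ground).1 hI

lemma insert_indep_iff (h : IsRepresentation 𝔽 M φ) (hI : M.Indep I) (he : e ∈ M.E)
    (heI : e ∉ I) : M.Indep (insert e I) ↔ φ e ∉ span 𝔽 (φ '' I) := by
  rw [h _ (Set.insert_subset he hI.subset_ground), linearIndepOn_insert heI,
    and_iff_right (h.linearIndepOn hI)]

lemma mem_span_of_isBasis (h : IsRepresentation 𝔽 M φ) (hI : M.IsBasis I X) (he : e ∈ X) :
    φ e ∈ span 𝔽 (φ '' I) := by
  by_cases heI : e ∈ I
  · exact subset_span (Set.mem_image_of_mem φ heI)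
  by_contra hspan
  exact (hI.insert_dep ⟨he, heI⟩).not_indep
    ((h.insert_indep_iff hI.indep (hI.subset_ground he) heI).2 hspan)

lemma span_image_eq_of_isBasis (h : IsRepresentation 𝔽 M φ) (hI : M.IsBasis I X) :
    span 𝔽 (φ '' I) = span 𝔽 (φ '' X) :=
  le_antisymm (span_mono (Set.image_mono hI.subset))
    (span_le.2 <| Set.image_subset_iff.2 fun _ he ↦ h.mem_span_of_isBasis hI he)

lemma mem_of_mem_span (h : IsRepresentation 𝔽 M φ) (hF : M.IsFlat F) (he : e ∈ M.E)
    (hspan : φ e ∈ span 𝔽 (φ '' F)) : e ∈ F := by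
  obtain ⟨I, hI⟩ := M.exists_isBasis F
  rw [← h.span_image_eq_of_isBasis hI] at hspan
  by_contra heF
  have heI : e ∉ I := fun heI ↦ heF (hI.subset heI)
  rw [← hF.closure, ← hI.closure_eq_closure] at heF
  exact (h.insert_indep_iff hI.indep he heI).1
    ((hI.indep.insert_indep_iff_of_notMem heI).2 ⟨he, heF⟩) hspan

lemma eRank_eq (h : IsRepresentation 𝔽 M φ) :
    M.eRank = (Module.rank 𝔽 (span 𝔽 (φ '' M.E))).toENat := by
  obtain ⟨B, hB⟩ := M.exists_isBase
  rw [← hB.encard_eq_eRank, ← h.span_image_eq_of_isBasis hB.isBasis_ground,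
    toENat_rank_span_set (h.linearIndepOn hB.indep)]

lemma rk_eq_finrank [FiniteDimensional 𝔽 V] (h : IsRepresentation 𝔽 M φ) :
    rk M = finrank 𝔽 (span 𝔽 (φ '' M.E)) := by
  rw [rk, erk_eq_eRank, h.eRank_eq, Cardinal.toNat_toENat]
  rfl

lemma ne_zero (h : IsRepresentation 𝔽 M φ) (he : M.Indep {e}) : φ e ≠ 0 :=
  (h.linearIndepOn he).ne_zero (Set.mem_singleton e)

lemma smul_ne_of_ne (h : IsRepresentation 𝔽 M φ) (hM : Simple M) (he : e ∈ M.E)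
    (hf : f ∈ M.E) (hef : e ≠ f) (c : 𝔽) : c • φ f ≠ φ e := by
  have hspan := (h.insert_indep_iff (hM.indep_singleton hf) he hef).1 (hM e he f hf)
  rw [Set.image_singleton] at hspan
  exact fun hc ↦ hspan (mem_span_singleton.2 ⟨c, hc⟩)

lemma span_image_ne_bot (h : IsRepresentation 𝔽 M φ) (hM : Simple M) (hF : F ⊆ M.E)
    (hne : F.Nonempty) : span 𝔽 (φ '' F) ≠ ⊥ := by
  obtain ⟨e, he⟩ := hne
  exact (Submodule.ne_bot_iff _).2
    ⟨φ e, subset_span (Set.mem_image_of_mem φ he), h.ne_zero (hM.indep_singleton (hF he))⟩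

/-- Simplicity makes `e ↦ [φ e]` injective into `ℙ(span φ(E))`, and by `hcard` it is then
bijective. -/
theorem coversEveryLine [Finite 𝔽] [Module.Finite 𝔽 V] (h : IsRepresentation 𝔽 M φ)
    (hM : Simple M)
    (hcard : M.E.ncard = ∑ i ∈ range (finrank 𝔽 (span 𝔽 (φ '' M.E))), Nat.card 𝔽 ^ i) :
    CoversEveryLine 𝔽 M φ := by
  set T := span 𝔽 (φ '' M.E)
  have := Module.finite_of_finite 𝔽 (M := T)
  have hφT (e : M.E) : φ e ∈ T := subset_span (Set.mem_image_of_mem φ e.2)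
  have hφ0 (e : M.E) : (⟨φ e, hφT e⟩ : T) ≠ 0 := by
    simpa using h.ne_zero (hM.indep_singleton e.2)
  let p (e : M.E) : Projectivization 𝔽 T := Projectivization.mk 𝔽 ⟨φ e, hφT e⟩ (hφ0 e)
  have hp : p.Injective := by
    intro e f hef
    obtain ⟨c, hc⟩ := (Projectivization.mk_eq_mk_iff _ _ _ _ _).1 hef
    by_contra hne
    exact h.smul_ne_of_ne hM e.2 f.2 (Subtype.coe_ne_coe.2 hne) c (congrArg Subtype.val hc)
  have hsurj := (hp.bijective_of_nat_card_le (by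
    rw [Projectivization.card_of_finrank 𝔽 T rfl, Nat.card_coe_set_eq, hcard])).2
  intro v hv hv0
  obtain ⟨e, he⟩ := hsurj (Projectivization.mk 𝔽 ⟨v, hv⟩ (by simpa using hv0))
  obtain ⟨c, hc⟩ := (Projectivization.mk_eq_mk_iff _ _ _ _ _).1 he.symm
  exact ⟨e, e.2, c, congrArg Subtype.val hc⟩

lemma disjoint_span_image (h : IsRepresentation 𝔽 M φ) (hfull : CoversEveryLine 𝔽 M φ)
    (hF : M.IsFlat F) (hF' : M.IsFlat F') (hFF' : Disjoint F F') :
    Disjoint (span 𝔽 (φ '' F)) (span 𝔽 (φ '' F')) := by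
  rw [Submodule.disjoint_def]
  intro v hv hv'
  by_contra hv0
  obtain ⟨e, he, c, rfl⟩ := hfull v (span_mono (Set.image_mono hF.subset_ground) hv) hv0
  rw [smul_mem_iff'] at hv hv'
  exact hFF'.ne_of_mem (h.mem_of_mem_span hF he hv) (h.mem_of_mem_span hF' he hv') rfl

end IsRepresentation

lemma CoversEveryLine.exists_mem_span_image {α V 𝔽 : Type*} [Field 𝔽] [AddCommGroup V]
    [Module 𝔽 V] {M : Matroid α} {φ : α → V} (hfull : CoversEveryLine 𝔽 M φ)
    {𝓕 : Set (Set α)} (hcover : ⋃₀ 𝓕 = M.E) (h𝓕 : 𝓕.Nonempty) {v : V}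
    (hv : v ∈ span 𝔽 (φ '' M.E)) : ∃ F ∈ 𝓕, v ∈ span 𝔽 (φ '' F) := by
  obtain rfl | hv0 := eq_or_ne v 0
  · obtain ⟨F, hF⟩ := h𝓕
    exact ⟨F, hF, zero_mem _⟩
  obtain ⟨e, he, c, rfl⟩ := hfull v hv hv0
  rw [← hcover] at he
  obtain ⟨F, hF, heF⟩ := he
  exact ⟨F, hF, smul_mem _ _ (subset_span (Set.mem_image_of_mem φ heF))⟩

end GrowthRate

section Cover

open Function

variable {𝔽 V ι : Type*} [Field 𝔽] [AddCommGroup V] [Module 𝔽 V] [Module.Finite 𝔽 V]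

lemma exists_finrank_lt_and_forall_ne_finrank_le_half (T : Submodule 𝔽 V) (s : Finset ι)
    (W : ι → Submodule 𝔽 V) (hWT : ∀ i ∈ s, W i ≤ T) (hbot : ∀ i ∈ s, W i ≠ ⊥)
    (hdisj : (s : Set ι).Pairwise (Disjoint on W)) (hs : 1 < s.card) :
    ∃ i ∈ s, finrank 𝔽 (W i) < finrank 𝔽 T ∧
      ∀ j ∈ s, j ≠ i → finrank 𝔽 (W j) ≤ finrank 𝔽 T / 2 := by
  have hadd : ∀ i ∈ s, ∀ j ∈ s, i ≠ j → finrank 𝔽 (W i) + finrank 𝔽 (W j) ≤ finrank 𝔽 T := by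
    intro i hi j hj hij
    rw [← Submodule.finrank_sup_add_finrank_inf_eq, (hdisj hi hj hij).eq_bot, finrank_bot,
      add_zero]
    exact Submodule.finrank_mono (sup_le (hWT i hi) (hWT j hj))
  obtain ⟨i, hi, hmax⟩ := s.exists_max_image (fun i ↦ finrank 𝔽 (W i)) (card_pos.1 (by omega))
  obtain ⟨j, hj, hji⟩ := s.exists_mem_ne hs i
  have hpos : 1 ≤ finrank 𝔽 (W j) := Submodule.one_le_finrank_iff.2 (hbot j hj)
  refine ⟨i, hi, by have := hadd i hi j hj hji.symm; omega, fun k hk hki ↦ ?_⟩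
  have := hadd i hi k hk hki.symm
  have := hmax k hk
  omega

theorem pow_lt_ncard_of_disjoint_cover [Finite 𝔽] (T : Submodule 𝔽 V) (s : Set ι)
    (W : ι → Submodule 𝔽 V) (hWT : ∀ i ∈ s, W i ≤ T) (hcover : ∀ v ∈ T, ∃ i ∈ s, v ∈ W i)
    (hbot : ∀ i ∈ s, W i ≠ ⊥) (hdisj : s.Pairwise (Disjoint on W)) (hs : 1 < s.ncard) :
    Nat.card 𝔽 ^ (finrank 𝔽 T - 1 - finrank 𝔽 T / 2) < s.ncard := by
  classical
  have := Module.finite_of_finite 𝔽 (M := V)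
  lift s to Finset ι using Set.finite_of_ncard_pos (by omega)
  rw [Set.ncard_coe_finset] at hs ⊢
  obtain ⟨i, hi, hlt, hsmall⟩ :=
    exists_finrank_lt_and_forall_ne_finrank_le_half T s W hWT hbot hdisj hs
  have hcard (U : Submodule 𝔽 V) : (U : Set V).ncard = Nat.card 𝔽 ^ finrank 𝔽 U := by
    rw [← Nat.card_coe_set_eq, SetLike.coe_sort_coe, Module.natCard_eq_pow_finrank (K := 𝔽)]
  have hcount : Nat.card 𝔽 ^ finrank 𝔽 T ≤
      Nat.card 𝔽 ^ finrank 𝔽 (W i) + (s.card - 1) * Nat.card 𝔽 ^ (finrank 𝔽 T / 2) :=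
    calc Nat.card 𝔽 ^ finrank 𝔽 T = (T : Set V).ncard := (hcard T).symm
      _ ≤ (⋃ j ∈ s, (W j : Set V)).ncard :=
        Set.ncard_le_ncard (fun v hv ↦ by simpa using hcover v hv) (Set.toFinite _)
      _ ≤ ∑ j ∈ s, (W j : Set V).ncard := s.set_ncard_biUnion_le _
      _ = (W i : Set V).ncard + ∑ j ∈ s.erase i, (W j : Set V).ncard :=
        (add_sum_erase _ _ hi).symm
      _ ≤ _ := by
        rw [hcard, ← card_erase_of_mem hi, ← smul_eq_mul, ← sum_const]
        gcongr with j hj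
        rw [hcard]
        exact Nat.pow_le_pow_right Finite.card_pos
          (hsmall j (mem_of_mem_erase hj) (ne_of_mem_erase hj))
  have := pow_sub_one_sub_half_le Finite.one_lt_card hlt hcount
  omega

end Cover

theorem flat_partition_lower_bound_general {α : Type u} (q n : ℕ)
    (G : Matroid α) (hG : IsPG q n G) (𝓕 : Set (Set α))
    (hflat : ∀ F ∈ 𝓕, G.IsFlat F) (hne : ∀ F ∈ 𝓕, F.Nonempty)
    (hcover : ⋃₀ 𝓕 = G.E) (hdisj : 𝓕.PairwiseDisjoint id)
    (hcard : 1 < 𝓕.ncard) :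
    (q : ℝ) ^ ((n : ℝ) / 2 - 1) < (𝓕.ncard : ℝ) := by
  obtain ⟨-, hsimple, hrk, ⟨𝔽, _, _, hq𝔽, _, φ, hφ⟩, hcount⟩ := hG
  rw [Fintype.card_eq_nat_card] at hq𝔽
  subst hq𝔽
  have hφ : IsRepresentation 𝔽 G φ := hφ
  have hT : finrank 𝔽 (span 𝔽 (φ '' G.E)) = n := hφ.rk_eq_finrank ▸ hrk
  have hfull := hφ.coversEveryLine hsimple (hT ▸ hcount)
  have key := pow_lt_ncard_of_disjoint_cover _ 𝓕 (fun F ↦ span 𝔽 (φ '' F))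
    (fun F hF ↦ span_mono (Set.image_mono (hflat F hF).subset_ground))
    (fun _ hv ↦ hfull.exists_mem_span_image hcover (Set.nonempty_of_ncard_ne_zero (by omega)) hv)
    (fun F hF ↦ hφ.span_image_ne_bot hsimple (hflat F hF).subset_ground (hne F hF))
    (fun F hF F' hF' h ↦ hφ.disjoint_span_image hfull (hflat F hF) (hflat F' hF') (hdisj hF hF' h))
    hcard
  rw [hT] at key
  calc (Nat.card 𝔽 : ℝ) ^ ((n : ℝ) / 2 - 1) ≤ (Nat.card 𝔽 : ℝ) ^ (n - 1 - n / 2) :=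
        rpow_div_two_sub_one_le_pow (by exact_mod_cast Finite.card_pos) n
    _ < 𝓕.ncard := by exact_mod_cast key

/-- a projective geometry `PG(n-1, q)` cannot be partitioned into more
than one but at most `q^(n/2 - 1)` flats. -/
theorem flat_partition_lower_bound {α : Type u} (q n : ℕ) (hq : IsPrimePow q)
    (hn : 1 ≤ n) (G : Matroid α) (hG : IsPG q n G) (𝓕 : Set (Set α))
    (hflat : ∀ F ∈ 𝓕, G.IsFlat F) (hne : ∀ F ∈ 𝓕, F.Nonempty)
    (hcover : ⋃₀ 𝓕 = G.E) (hdisj : 𝓕.PairwiseDisjoint id)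
    (hcard : 1 < 𝓕.ncard) :
    (q : ℝ) ^ ((n : ℝ) / 2 - 1) < (𝓕.ncard : ℝ) :=
  flat_partition_lower_bound_general q n G hG 𝓕 hflat hne hcover hdisj hcard
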